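/- Let f : {0,1}^n → ℝ≥0 be monotone submodular with f(0^n) = 0, let OPT be a set of size at most r maximizing f among sets of size ≤ r, and let x be a set with f(x) ≥ (1 - (1-1/r)^j)·f(OPT). If y is obtained from x by adding the single element with largest marginal gain, then f(y) ≥ (1 - (1-1/r)^(j+1))·f(OPT). -/
import Mathlib


theorem stmt_3 {α : Type*} [DecidableEq α] [Fintype α]
    (f : Finset α → ℝ)
    (hmono : ∀ S T : Finset α, S ⊆ T → f S ≤ f T)
    (hsub : ∀ S T : Finset α, S ⊆ T → ∀ i ∉ T,
      f (insert i T) - f T ≤ f (insert i S) - f S)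
    (hzero : f ∅ = 0)
    (r : ℕ) (hr : 0 < r)
    (OPT : Finset α) (hOPTcard : OPT.card ≤ r)
    (hOPT : ∀ S : Finset α, S.card ≤ r → f S ≤ f OPT)
    (x : Finset α) (j : ℕ)
    (hx : f x ≥ (1 - (1 - 1 / (r : ℝ)) ^ j) * f OPT)
    (i : α) (hi : i ∉ x)
    (hmax : ∀ i' ∉ x, f (insert i' x) - f x ≤ f (insert i x) - f x) :
    f (insert i x) ≥ (1 - (1 - 1 / (r : ℝ)) ^ (j + 1)) * f OPT := by
  set g : ℝ := f (insert i x) - f x with hg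
  have hg0 : 0 ≤ g := by
    have := hmono x (insert i x) (Finset.subset_insert i x)
    linarith
  -- key: for disjoint T, f (x ∪ T) - f x ≤ T.card * g
  have key : ∀ T : Finset α, Disjoint T x → f (x ∪ T) - f x ≤ T.card * g := by
    intro T
    induction T using Finset.induction_on with
    | empty => intro _; simp
    | @insert e T he ih =>
      intro hdisj
      have hex : e ∉ x := by
        intro h
        exact (Finset.disjoint_left.mp hdisj (Finset.mem_insert_self e T)) h
      have hdT : Disjoint T x :=
        (Finset.disjoint_insert_left.mp hdisj).2
      have heT : e ∉ x ∪ T := by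
        simp [hex, he]
      have h1 : f (insert e (x ∪ T)) - f (x ∪ T) ≤ f (insert e x) - f x :=
        hsub x (x ∪ T) Finset.subset_union_left e heT
      have h2 : f (insert e x) - f x ≤ g := hmax e hex
      have h3 := ih hdT
      have hcard : ((insert e T).card : ℝ) = T.card + 1 := by
        rw [Finset.card_insert_of_notMem he]; push_cast; ring
      have hunion : x ∪ insert e T = insert e (x ∪ T) := by
        ext a; simp [or_comm, or_assoc, or_left_comm]
      rw [hunion, hcard]
      nlinarith
  have hF0 : 0 ≤ f OPT := by
    have := hmono ∅ OPT (Finset.empty_subset _)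
    linarith
  have hgain : f OPT - f x ≤ (r : ℝ) * g := by
    have hdisj : Disjoint (OPT \ x) x := Finset.sdiff_disjoint
    have h1 := key (OPT \ x) hdisj
    have h2 : f OPT ≤ f (x ∪ (OPT \ x)) := by
      apply hmono
      intro a ha
      by_cases hax : a ∈ x <;> simp [hax, ha]
    have hcard : ((OPT \ x).card : ℝ) ≤ (r : ℝ) := by
      have : (OPT \ x).card ≤ OPT.card := Finset.card_le_card (Finset.sdiff_subset)
      exact_mod_cast this.trans hOPTcard
    nlinarith
  have hrR : (1 : ℝ) ≤ (r : ℝ) := by exact_mod_cast hr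
  have hrpos : (0 : ℝ) < (r : ℝ) := by linarith
  have hc0 : (0 : ℝ) ≤ 1 - 1 / (r : ℝ) := by
    rw [sub_nonneg, div_le_one hrpos]; linarith
  -- f (insert i x) = f x + g ≥ f x + (f OPT - f x)/r
  have step : f (insert i x) ≥ f x + (f OPT - f x) / (r : ℝ) := by
    have : (f OPT - f x) / (r : ℝ) ≤ g := by
      rw [div_le_iff₀ hrpos]; nlinarith
    linarith
  have hcj : (0 : ℝ) ≤ (1 - 1 / (r : ℝ)) ^ j := pow_nonneg hc0 j
  have calc1 : f x + (f OPT - f x) / (r : ℝ)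
      = (1 - 1 / (r : ℝ)) * f x + f OPT / (r : ℝ) := by
    field_simp; ring
  have calc2 : (1 - 1 / (r : ℝ)) * f x + f OPT / (r : ℝ)
      ≥ (1 - (1 - 1 / (r : ℝ)) ^ (j + 1)) * f OPT := by
    have hmul : (1 - 1 / (r : ℝ)) * f x ≥
        (1 - 1 / (r : ℝ)) * ((1 - (1 - 1 / (r : ℝ)) ^ j) * f OPT) :=
      mul_le_mul_of_nonneg_left hx hc0
    have expand : (1 - 1 / (r : ℝ)) * ((1 - (1 - 1 / (r : ℝ)) ^ j) * f OPT) + f OPT / (r : ℝ)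
        = (1 - (1 - 1 / (r : ℝ)) ^ (j + 1)) * f OPT := by
      rw [pow_succ]; field_simp; ring
    linarith
  linarith
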